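/- arXiv:1109.6264 — 6 statements merged into one kernel-verified Lean document; each statement's English description precedes it below -/
import Mathlib

section
/- Let Σ be a finite alphabet and L a language over Σ that is upward closed under the scattered-subword order, i.e., whenever v ∈ L and v is a (not necessarily contiguous) subsequence of a word w over Σ, then w ∈ L. Then every strong iterative pair of L is very degenerate. -/
/-- `wpow y i` is the word `y^i`, the concatenation of `i` copies of `y`. -/
def wpow {α : Type*} (y : List α) (i : ℕ) : List α := (List.replicate i y).flatten

/-- If `L` is upward closed under the scattered-subword (subsequence) order,
then every strong iterative pair of `L` is very degenerate. -/
theorem upward_closed_very_degenerate {α : Type*} [Fintype α] (L : Language α)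
    (hup : ∀ v w : List α, v ∈ L → v.Sublist w → w ∈ L)
    (x y z u t : List α) (hy : y ≠ []) (hu : u ≠ [])
    (hpair : ∀ i : ℕ, x ++ wpow y i ++ z ++ wpow u i ++ t ∈ L) :
    ∀ i j : ℕ, x ++ wpow y i ++ z ++ wpow u j ++ t ∈ L := by
  have hpow : ∀ (w : List α) (k m : ℕ), k ≤ m → (wpow w k).Sublist (wpow w m) := by
    intro w k m hkm
    have : wpow w m = wpow w k ++ wpow w (m - k) := by
      unfold wpow
      rw [← List.flatten_append, ← List.replicate_add, Nat.add_sub_cancel' hkm]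
    rw [this]
    exact List.sublist_append_left _ _
  intro i j
  refine hup _ _ (hpair (min i j)) ?_
  refine ((((List.Sublist.refl x).append (hpow y _ _ (min_le_left i j))).append
    (List.Sublist.refl z)).append (hpow u _ _ (min_le_right i j))).append
    (List.Sublist.refl t)
end

section
/- Let Σ be a finite alphabet and L a context-free language over Σ. Then the upward closure of L under the scattered-subword order, namely the language {w over Σ : there exists v ∈ L such that v is a subsequence of w}, is a regular language. -/
open Classical in
/-- The DFA recognizing `{w | u.Sublist w}`. -/
private noncomputable def subDFA {α : Type*} (u : List α) : DFA α (Fin (u.length + 1)) where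
  step q a :=
    if h : (q : ℕ) < u.length then
      if a = u[(q : ℕ)] then ⟨(q : ℕ) + 1, by omega⟩ else q
    else q
  start := ⟨0, by omega⟩
  accept := {q | (q : ℕ) = u.length}

private theorem subDFA_evalFrom {α : Type*} (u : List α) (w : List α) :
    ∀ q : Fin (u.length + 1),
      (((subDFA u).evalFrom q w : ℕ) = u.length ↔ (u.drop q).Sublist w) := by
  induction w with
  | nil =>
    intro q
    simp only [DFA.evalFrom_nil, List.sublist_nil, List.drop_eq_nil_iff]
    omega
  | cons a t ih =>
    intro q
    show (((subDFA u).evalFrom ((subDFA u).step q a) t : ℕ) = u.length ↔ _)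
    by_cases h : (q : ℕ) < u.length
    · have hd : u.drop q = u[(q : ℕ)] :: u.drop ((q : ℕ) + 1) :=
        List.drop_eq_getElem_cons h
      by_cases ha : a = u[(q : ℕ)]
      · have hstep : (subDFA u).step q a = ⟨(q : ℕ) + 1, by omega⟩ := by
          simp [subDFA, h, ha]
        rw [hstep, ih]
        rw [hd, ha]
        exact (List.cons_sublist_cons).symm
      · have hstep : (subDFA u).step q a = q := by
          simp [subDFA, h, ha]
        rw [hstep, ih]
        constructor
        · exact fun hs => hs.trans (List.sublist_cons_self a t)
        · intro hs
          rw [hd] at hs ⊢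
          rcases List.cons_sublist_cons'.mp hs with h' | ⟨h1, _⟩
          · exact h'
          · exact absurd h1.symm ha
    · have hq : (q : ℕ) = u.length := by omega
      have hstep : (subDFA u).step q a = q := by simp [subDFA, h]
      rw [hstep, ih]
      have hnil : u.drop q = [] := List.drop_eq_nil_iff.mpr (le_of_eq hq.symm)
      simp [hnil]

private theorem isRegular_up {α : Type*} (u : List α) :
    Language.IsRegular ({w : List α | u.Sublist w} : Language α) := by
  refine ⟨Fin (u.length + 1), inferInstance, subDFA u, ?_⟩
  ext w
  show ((subDFA u).evalFrom (subDFA u).start w) ∈ (subDFA u).accept ↔ u.Sublist w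
  have := subDFA_evalFrom u w (subDFA u).start
  simpa [subDFA, DFA.accept] using this

private theorem isRegular_union {α : Type*} {L₁ L₂ : Language α}
    (h₁ : L₁.IsRegular) (h₂ : L₂.IsRegular) : Language.IsRegular (L₁ + L₂) := by
  obtain ⟨σ₁, _, M₁, rfl⟩ := h₁
  obtain ⟨σ₂, _, M₂, rfl⟩ := h₂
  refine ⟨σ₁ × σ₂, inferInstance,
    ⟨fun p a => (M₁.step p.1 a, M₂.step p.2 a), (M₁.start, M₂.start),
      {p | p.1 ∈ M₁.accept ∨ p.2 ∈ M₂.accept}⟩, ?_⟩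
  have key : ∀ (w : List α) (p : σ₁ × σ₂),
      DFA.evalFrom ⟨fun p a => (M₁.step p.1 a, M₂.step p.2 a), (M₁.start, M₂.start),
        {p | p.1 ∈ M₁.accept ∨ p.2 ∈ M₂.accept}⟩ p w
        = (M₁.evalFrom p.1 w, M₂.evalFrom p.2 w) := by
    intro w
    induction w with
    | nil => intro p; rfl
    | cons a t ih => intro p; exact ih _
  ext w
  rw [Language.mem_add, DFA.mem_accepts, DFA.mem_accepts, DFA.mem_accepts]
  show DFA.evalFrom _ (M₁.start, M₂.start) w ∈
    {p : σ₁ × σ₂ | p.1 ∈ M₁.accept ∨ p.2 ∈ M₂.accept} ↔ _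
  rw [key w (M₁.start, M₂.start)]
  rfl

private theorem isRegular_zero {α : Type*} :
    Language.IsRegular (0 : Language α) :=
  ⟨Unit, inferInstance, ⟨fun _ _ => (), (), ∅⟩, by
    ext w
    exact ⟨fun h => h.elim, fun h => (Language.notMem_zero w h).elim⟩⟩

private theorem exists_finite_basis {α : Type*} [Fintype α] (L : Set (List α)) :
    ∃ B : Set (List α), B.Finite ∧ B ⊆ L ∧ ∀ v ∈ L, ∃ u ∈ B, u.Sublist v := by
  set B : Set (List α) := {v ∈ L | ∀ x ∈ L, x.Sublist v → x = v} with hB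
  have hBL : B ⊆ L := fun v hv => hv.1
  have hbasis : ∀ n : ℕ, ∀ v ∈ L, v.length = n → ∃ u ∈ B, u.Sublist v := by
    intro n
    induction n using Nat.strong_induction_on with
    | _ n ih =>
      intro v hv hn
      by_cases hmin : ∀ x ∈ L, x.Sublist v → x = v
      · exact ⟨v, ⟨hv, hmin⟩, List.Sublist.refl v⟩
      · push_neg at hmin
        obtain ⟨x, hxL, hxs, hxne⟩ := hmin
        have hlt : x.length < n := by
          rcases Nat.lt_or_ge x.length v.length with h | h
          · omega
          · exact absurd (hxs.eq_of_length (le_antisymm hxs.length_le h)) hxne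
        obtain ⟨u, huB, hus⟩ := ih x.length hlt x hxL rfl
        exact ⟨u, huB, hus.trans hxs⟩
  refine ⟨B, ?_, hBL, fun v hv => hbasis v.length v hv rfl⟩
  have hanti : IsAntichain (fun a b => a.Sublist b) B := by
    intro a ha b hb hne hab
    exact hne (hb.2 a ha.1 hab)
  have hpwo : (Set.univ : Set (List α)).PartiallyWellOrderedOn
      (List.SublistForall₂ (· = · : α → α → Prop)) := by
    have huniv : (Set.univ : Set α).PartiallyWellOrderedOn (· = ·) :=
      Set.finite_univ.partiallyWellOrderedOn
    have h2 := Set.PartiallyWellOrderedOn.partiallyWellOrderedOn_sublistForall₂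
      (· = · : α → α → Prop) huniv
    refine h2.mono ?_
    intro l _ x _
    exact Set.mem_univ x
  have hpwo' : B.PartiallyWellOrderedOn (fun a b => a.Sublist b) := by
    intro f
    obtain ⟨m, n, hmn, hr⟩ := hpwo (fun n => ⟨(f n).1, Set.mem_univ _⟩)
    refine ⟨m, n, hmn, ?_⟩
    replace hr : List.SublistForall₂ (· = · : α → α → Prop) (f m).1 (f n).1 := hr
    show (f m).1.Sublist (f n).1
    obtain ⟨l, hl2, hls⟩ := List.sublistForall₂_iff.mp hr
    rw [List.forall₂_eq_eq_eq] at hl2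
    exact hl2 ▸ hls
  exact hanti.finite_of_partiallyWellOrderedOn hpwo'

private theorem isRegular_up_set {α : Type*} (B : Set (List α)) (hBfin : B.Finite) :
    Language.IsRegular ({w : List α | ∃ u ∈ B, u.Sublist w} : Language α) := by
  refine Set.Finite.induction_on
    (motive := fun B _ => Language.IsRegular ({w : List α | ∃ u ∈ B, u.Sublist w} : Language α))
    B hBfin ?_ ?_
  · show Language.IsRegular ({w : List α | ∃ u ∈ (∅ : Set (List α)), u.Sublist w} : Language α)
    have h0 : ({w : List α | ∃ u ∈ (∅ : Set (List α)), u.Sublist w} : Language α)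
        = (0 : Language α) := by
      ext w; simp [Language.notMem_zero]
      intro h; exact (Language.notMem_zero w h)
    rw [h0]; exact isRegular_zero
  · intro a s _ _ ih
    show Language.IsRegular ({w : List α | ∃ u ∈ insert a s, u.Sublist w} : Language α)
    set A : Language α := ({w : List α | a.Sublist w} : Language α) with hA
    set C : Language α := ({w : List α | ∃ u ∈ s, u.Sublist w} : Language α) with hC
    have hins : ({w : List α | ∃ u ∈ insert a s, u.Sublist w} : Language α) = A + C := by
      refine Language.ext fun w => ?_
      rw [Language.mem_add]
      simp only [Set.mem_insert_iff, Set.mem_setOf_eq]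
      constructor
      · rintro ⟨u, (rfl | hu), hs⟩
        · exact Or.inl hs
        · exact Or.inr ⟨u, hu, hs⟩
      · rintro (h | ⟨u, hu, hs⟩)
        · exact ⟨a, Or.inl rfl, h⟩
        · exact ⟨u, Or.inr hu, hs⟩
    rw [hins]
    exact isRegular_union (isRegular_up a) ih

/-- The upward closure under the scattered-subword order of a context-free
language is regular. -/
theorem upward_closure_isRegular {α : Type*} [Fintype α] (L : Language α)
    (hCF : L.IsContextFree) :
    Language.IsRegular ({w : List α | ∃ v ∈ L, v.Sublist w} : Language α) := by
  obtain ⟨B, hBfin, hBL, hbasis⟩ := exists_finite_basis (L : Set (List α))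
  have heq : ({w : List α | ∃ v ∈ L, v.Sublist w} : Language α)
      = ({w : List α | ∃ u ∈ B, u.Sublist w} : Language α) := by
    ext w
    constructor
    · rintro ⟨v, hvL, hvw⟩
      obtain ⟨u, huB, huv⟩ := hbasis v hvL
      exact ⟨u, huB, huv.trans hvw⟩
    · rintro ⟨u, huB, huw⟩
      exact ⟨u, hBL huB, huw⟩
  rw [heq]
  exact isRegular_up_set B hBfin
end

section
/- Let Σ be a finite alphabet and L a context-free language over Σ that is upward closed under the scattered-subword order, i.e., whenever v ∈ L and v is a subsequence of a word w over Σ, then w ∈ L. Then L is a regular language. -/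
open Set

/-- Higman's lemma for the sublist order over a finite alphabet. -/
lemma sublist_pwo {α : Type*} [Fintype α] :
    (Set.univ : Set (List α)).PartiallyWellOrderedOn List.Sublist := by
  have h : (Set.univ : Set α).PartiallyWellOrderedOn (· = ·) :=
    Set.finite_univ.partiallyWellOrderedOn
  have H := Set.PartiallyWellOrderedOn.partiallyWellOrderedOn_sublistForall₂ (· = ·) h
  intro f
  obtain ⟨m, n, hmn, hr⟩ := H (fun n => ⟨(f n).1, fun x _ => mem_univ x⟩)
  refine ⟨m, n, hmn, ?_⟩
  change List.SublistForall₂ (· = ·) (f m).1 (f n).1 at hr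
  show (f m).1.Sublist (f n).1
  rw [List.sublistForall₂_iff] at hr
  obtain ⟨l, h1, h2⟩ := hr
  have h1' : (f m).1 = l := by simpa using h1
  rwa [h1']

/-- A context-free language that is upward closed under the scattered-subword
order is regular. -/
theorem upward_closed_contextFree_isRegular {α : Type*} [Fintype α] (L : Language α)
    (hCF : L.IsContextFree)
    (hup : ∀ v w : List α, v ∈ L → v.Sublist w → w ∈ L) :
    L.IsRegular := by
  classical
  -- left quotients
  set Q : List α → Language α := fun w => {u | w ++ u ∈ L} with hQ
  -- each quotient is upward closed
  have hQup : ∀ w, ∀ u u' : List α, u ∈ Q w → u.Sublist u' → u' ∈ Q w := by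
    intro w u u' hu huu'
    exact hup _ _ hu ((List.Sublist.refl w).append huu')
  -- monotonicity in w
  have hQmono : ∀ w w' : List α, w.Sublist w' → ∀ u, u ∈ Q w → u ∈ Q w' := by
    intro w w' hww' u hu
    exact hup _ _ hu (hww'.append (List.Sublist.refl u))
  haveI : IsRefl (List α) List.Sublist := ⟨List.Sublist.refl⟩
  haveI : IsTrans (List α) List.Sublist := ⟨fun _ _ _ => List.Sublist.trans⟩
  haveI : IsPreorder (List α) List.Sublist :=
    { refl := List.Sublist.refl, trans := fun _ _ _ => List.Sublist.trans }
  have hpwo := sublist_pwo (α := α)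
  -- the range of Q is finite (Myhill–Nerode style)
  have hfin : (Set.range Q).Finite := by
    by_contra hinf
    replace hinf : (Set.range Q).Infinite := hinf
    let g : ℕ ↪ ↥(Set.range Q) := Set.Infinite.natEmbedding _ hinf
    choose w hw using fun n => (g n).2
    have hginj : Function.Injective fun n => Q (w n) := by
      intro m n h
      simp only [hw] at h
      exact g.injective (Subtype.ext h)
    obtain ⟨φ, hφ⟩ := hpwo.exists_monotone_subseq (f := w) (fun n => mem_univ _)
    set Ln : ℕ → Language α := fun n => Q (w (φ n)) with hLn
    have hchain : ∀ m n, m ≤ n → ∀ u, u ∈ Ln m → u ∈ Ln n := fun m n h => hQmono _ _ (hφ m n h)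
    have hstep : ∀ n, ∃ u, u ∈ Ln (n + 1) ∧ u ∉ Ln n := by
      intro n
      have hne : Ln n ≠ Ln (n + 1) := by
        intro h
        have := φ.injective (hginj h)
        omega
      by_contra hc
      push_neg at hc
      refine hne ?_
      ext u
      exact ⟨fun h => hchain n (n+1) (by omega) u h, fun h => by
        by_contra h'; exact h' (hc u h)⟩
    choose u hu1 hu2 using hstep
    obtain ⟨m, n, hmn, hsub⟩ := hpwo (fun n => ⟨u n, mem_univ _⟩)
    have : u m ∈ Ln n := hchain (m + 1) n hmn _ (hu1 m)
    exact hu2 n (hQup _ _ _ this hsub)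
  -- build the DFA whose states are the left quotients
  haveI : Fintype (Set.range Q) := hfin.fintype
  let M : DFA α ↥(Set.range Q) :=
    { step := fun s a => ⟨{u | a :: u ∈ s.1}, by
        obtain ⟨w, hw⟩ := s.2
        refine ⟨w ++ [a], ?_⟩
        rw [← hw]
        ext u
        show w ++ [a] ++ u ∈ L ↔ a :: u ∈ {u | w ++ u ∈ L}
        rw [List.append_assoc]
        rfl⟩
      start := ⟨Q [], Set.mem_range_self _⟩
      accept := {s | [] ∈ s.1} }
  have heval : ∀ x : List α,
      M.eval x = (⟨Q x, Set.mem_range_self x⟩ : Set.range Q) := by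
    intro x
    induction x using List.reverseRecOn with
    | nil => rfl
    | append_singleton y a ih =>
      rw [DFA.eval_append_singleton, ih]
      refine Subtype.ext ?_
      ext u
      show a :: u ∈ {u | y ++ u ∈ L} ↔ y ++ [a] ++ u ∈ L
      rw [List.append_assoc]
      rfl
  have haccepts : M.accepts = L := by
    ext x
    rw [DFA.mem_accepts, heval]
    show x ++ [] ∈ L ↔ x ∈ L
    rw [List.append_nil]
  exact ⟨Fin (Fintype.card ↥(Set.range Q)), inferInstance,
    DFA.reindex (Fintype.equivFin _) M, by rw [DFA.accepts_reindex, haccepts]⟩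
end

section
/- Let Σ be a finite alphabet and L a context-free language over Σ. Then the upward closure of L under the scattered-subword order, namely the language {w over Σ : there exists v ∈ L such that v is a subsequence of w}, is a context-free language. -/
namespace UpClosureAux

open ContextFreeGrammar

variable {α : Type*}

/-- `Ins s t` : `t` is obtained from `s` by inserting terminal symbols. -/
inductive Ins {N : Type} : List (Symbol α N) → List (Symbol α N) → Prop
  | nil : Ins [] []
  | cons (x : Symbol α N) {s t : List (Symbol α N)} : Ins s t → Ins (x :: s) (x :: t)
  | ins (a : α) {s t : List (Symbol α N)} : Ins s t → Ins s (Symbol.terminal a :: t)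

namespace Ins

variable {N : Type}

lemma refl (s : List (Symbol α N)) : Ins s s := by
  induction s with
  | nil => exact .nil
  | cons x s ih => exact .cons x ih

lemma append {s₁ t₁ s₂ t₂ : List (Symbol α N)} (h₁ : Ins s₁ t₁) (h₂ : Ins s₂ t₂) :
    Ins (s₁ ++ s₂) (t₁ ++ t₂) := by
  induction h₁ with
  | nil => simpa
  | cons x _ ih => exact .cons x ih
  | ins a _ ih => exact .ins a ih

lemma sublist {s t : List (Symbol α N)} (h : Ins s t) : s.Sublist t := by
  induction h with
  | nil => exact List.Sublist.refl _
  | cons x _ ih => exact ih.cons₂ x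
  | ins a _ ih => exact ih.cons _

lemma trans {s t u : List (Symbol α N)} (h₁ : Ins s t) (h₂ : Ins t u) : Ins s u := by
  induction h₂ generalizing s with
  | nil => exact h₁
  | cons x h ih =>
    cases h₁ with
    | cons y h' => exact .cons _ (ih h')
    | ins a h' => exact .ins a (ih h')
  | ins a h ih => exact .ins a (ih h₁)

lemma insert_middle (x y : List (Symbol α N)) (a : α) :
    Ins (x ++ y) (x ++ Symbol.terminal a :: y) := by
  induction x with
  | nil => exact .ins a (refl y)
  | cons z x ih => exact .cons z ih

lemma split_nt {s p q : List (Symbol α N)} {n : N}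
    (h : Ins s (p ++ Symbol.nonterminal n :: q)) :
    ∃ p₀ q₀, s = p₀ ++ Symbol.nonterminal n :: q₀ ∧ Ins p₀ p ∧ Ins q₀ q := by
  induction p generalizing s with
  | nil =>
    cases h with
    | cons x h' => exact ⟨[], _, rfl, .nil, h'⟩
  | cons x p ih =>
    cases h with
    | cons y h' =>
      obtain ⟨p₀, q₀, rfl, hp, hq⟩ := ih h'
      exact ⟨x :: p₀, q₀, rfl, .cons x hp, hq⟩
    | ins a h' =>
      obtain ⟨p₀, q₀, rfl, hp, hq⟩ := ih h'
      exact ⟨p₀, q₀, rfl, .ins a hp, hq⟩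

end Ins

variable (g : ContextFreeGrammar α)

/-- New nonterminal type: `none` is the new start symbol, `some none` is the universal
nonterminal generating all words, `some (some n)` is an old nonterminal. -/
abbrev N' : Type := Option (Option g.NT)

/-- The universal nonterminal as a symbol. -/
def U : Symbol α (N' g) := Symbol.nonterminal (some none)

/-- Embedding on symbols: a terminal gets a universal nonterminal in front of it. -/
def f : Symbol α g.NT → List (Symbol α (N' g))
  | .terminal a => [U g, Symbol.terminal a]
  | .nonterminal n => [Symbol.nonterminal (some (some n))]

/-- Projection back. -/
def π : Symbol α (N' g) → List (Symbol α g.NT)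
  | .terminal a => [Symbol.terminal a]
  | .nonterminal none => [Symbol.nonterminal g.initial]
  | .nonterminal (some none) => []
  | .nonterminal (some (some n)) => [Symbol.nonterminal n]

/-- Embedding on strings. -/
def emb (s : List (Symbol α g.NT)) : List (Symbol α (N' g)) := s.flatMap (f g)

/-- Projection on strings. -/
def proj (s : List (Symbol α (N' g))) : List (Symbol α g.NT) := s.flatMap (π g)

lemma emb_append (x y : List (Symbol α g.NT)) : emb g (x ++ y) = emb g x ++ emb g y :=
  List.flatMap_append ..

lemma proj_append (x y : List (Symbol α (N' g))) : proj g (x ++ y) = proj g x ++ proj g y :=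
  List.flatMap_append ..

lemma proj_emb (s : List (Symbol α g.NT)) : proj g (emb g s) = s := by
  induction s with
  | nil => rfl
  | cons x s ih =>
    cases x <;> simp [emb, proj, f, π, U] at ih ⊢ <;>
      simpa [emb, proj] using ih

lemma proj_map_terminal (w : List α) :
    proj g (w.map Symbol.terminal) = w.map Symbol.terminal := by
  induction w with
  | nil => rfl
  | cons a w ih => simpa [proj, π] using ih

/-- Image of an old rule. -/
def mapRule (r : ContextFreeRule α g.NT) : ContextFreeRule α (N' g) :=
  ⟨some (some r.input), emb g r.output⟩

/-- The start rule. -/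
def startRule : ContextFreeRule α (N' g) :=
  ⟨none, [Symbol.nonterminal (some (some g.initial)), U g]⟩

/-- `U → ε`. -/
def nilRule : ContextFreeRule α (N' g) := ⟨some none, []⟩

/-- `U → a U`. -/
def consRule (a : α) : ContextFreeRule α (N' g) :=
  ⟨some none, [Symbol.terminal a, U g]⟩

/-- The grammar for the upward closure. -/
noncomputable abbrev g' [Fintype α] : ContextFreeGrammar α :=
  letI : DecidableEq (ContextFreeRule α (N' g)) := Classical.decEq _
  ⟨N' g, none,
    ({startRule g} ∪ {nilRule g} ∪ (Finset.univ.image (consRule g)) ∪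
      (g.rules.image (mapRule g)) : Finset (ContextFreeRule α (N' g)))⟩

variable [Fintype α]

lemma mem_rules_iff (r : ContextFreeRule α (N' g)) :
    r ∈ (g' g).rules ↔ r = startRule g ∨ r = nilRule g ∨ (∃ a : α, r = consRule g a) ∨
      ∃ r₀ ∈ g.rules, r = mapRule g r₀ := by
  simp only [g', Finset.mem_union, Finset.mem_singleton, Finset.mem_image, Finset.mem_univ,
    true_and]
  constructor
  · rintro (((h | h) | ⟨a, rfl⟩) | ⟨r₀, hr₀, rfl⟩)
    · exact .inl h
    · exact .inr (.inl h)
    · exact .inr (.inr (.inl ⟨a, rfl⟩))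
    · exact .inr (.inr (.inr ⟨r₀, hr₀, rfl⟩))
  · rintro (h | h | ⟨a, rfl⟩ | ⟨r₀, hr₀, rfl⟩)
    · exact .inl (.inl (.inl h))
    · exact .inl (.inl (.inr h))
    · exact .inl (.inr ⟨a, rfl⟩)
    · exact .inr ⟨r₀, hr₀, rfl⟩

lemma startRule_mem : startRule g ∈ (g' g).rules := (mem_rules_iff g _).2 (.inl rfl)
lemma nilRule_mem : nilRule g ∈ (g' g).rules := (mem_rules_iff g _).2 (.inr (.inl rfl))
lemma consRule_mem (a : α) : consRule g a ∈ (g' g).rules :=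
  (mem_rules_iff g _).2 (.inr (.inr (.inl ⟨a, rfl⟩)))
lemma mapRule_mem {r : ContextFreeRule α g.NT} (hr : r ∈ g.rules) :
    mapRule g r ∈ (g' g).rules := (mem_rules_iff g _).2 (.inr (.inr (.inr ⟨r, hr, rfl⟩)))

/-- Lifting derivations of `g` to `g'`. -/
lemma derives_emb {u v : List (Symbol α g.NT)} (h : g.Derives u v) :
    (g' g).Derives (emb g u) (emb g v) := by
  induction h with
  | refl => rfl
  | tail _ step ih =>
    refine ih.trans_produces ?_
    obtain ⟨r, hr, hrw⟩ := step
    obtain ⟨p, q, rfl, rfl⟩ := hrw.exists_parts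
    refine ⟨mapRule g r, mapRule_mem g hr, ?_⟩
    have := ContextFreeRule.rewrites_of_exists_parts (mapRule g r) (emb g p) (emb g q)
    simpa [emb_append, mapRule, emb, f] using this

/-- Every string `emb (map terminal v) ++ [U]` derives every supersequence of `v`. -/
lemma derives_supersequence {v w : List α} (h : v.Sublist w) :
    (g' g).Derives (emb g (v.map Symbol.terminal) ++ [U g]) (w.map Symbol.terminal) := by
  induction h with
  | slnil =>
    refine Produces.single ⟨nilRule g, nilRule_mem g, ?_⟩
    simpa [U, nilRule, emb] using ContextFreeRule.Rewrites.head (r := nilRule g) []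
  | @cons v w a h ih =>
    -- insert `a` in front using U → a U
    have hhead : ∃ rest, emb g (v.map Symbol.terminal) ++ [U g]
        = Symbol.nonterminal (some none) :: rest ∧
          Symbol.nonterminal (some none) :: rest
            = emb g (v.map Symbol.terminal) ++ [U g] := by
      cases v with
      | nil => exact ⟨[], by simp [emb, U], by simp [emb, U]⟩
      | cons b v =>
        exact ⟨Symbol.terminal b :: (emb g (v.map Symbol.terminal) ++ [U g]),
          by simp [emb, f, U], by simp [emb, f, U]⟩
    obtain ⟨rest, h1, h2⟩ := hhead
    have hprod : (g' g).Produces (emb g (v.map Symbol.terminal) ++ [U g])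
        (Symbol.terminal a :: (emb g (v.map Symbol.terminal) ++ [U g])) := by
      refine ⟨consRule g a, consRule_mem g a, ?_⟩
      rw [h1]
      simpa [consRule, U] using ContextFreeRule.Rewrites.head (r := consRule g a) rest
    refine hprod.trans_derives ?_
    have := ih.append_left [Symbol.terminal a]
    simpa using this
  | @cons_cons v w a h ih =>
    have hprod : (g' g).Produces (emb g ((a :: v).map Symbol.terminal) ++ [U g])
        (Symbol.terminal a :: (emb g (v.map Symbol.terminal) ++ [U g])) := by
      refine ⟨nilRule g, nilRule_mem g, ?_⟩
      have : emb g ((a :: v).map Symbol.terminal) ++ [U g]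
          = Symbol.nonterminal (some none)
            :: (Symbol.terminal a :: (emb g (v.map Symbol.terminal) ++ [U g])) := by
        simp [emb, f, U]
      rw [this]
      exact ContextFreeRule.Rewrites.head (r := nilRule g) _
    refine hprod.trans_derives ?_
    have := ih.append_left [Symbol.terminal a]
    simpa using this

/-- Soundness invariant: anything derivable in `g'` projects, up to inserted terminals,
to something derivable in `g`. -/
lemma soundness {u : List (Symbol α (N' g))}
    (h : (g' g).Derives [Symbol.nonterminal (g' g).initial] u) :
    ∃ s, g.Derives [Symbol.nonterminal g.initial] s ∧ Ins s (proj g u) := by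
  induction h with
  | refl =>
    exact ⟨[Symbol.nonterminal g.initial], Derives.refl _,
      by simpa [proj, π, g'] using Ins.refl _⟩
  | tail _ step ih =>
    obtain ⟨s, hs, hins⟩ := ih
    obtain ⟨r, hr, hrw⟩ := step
    obtain ⟨p, q, rfl, rfl⟩ := hrw.exists_parts
    rcases (mem_rules_iff g r).1 hr with rfl | rfl | ⟨a, rfl⟩ | ⟨r₀, hr₀, rfl⟩
    · -- start rule: projection unchanged
      refine ⟨s, hs, ?_⟩
      have : proj g (p ++ [Symbol.nonterminal (startRule g).input] ++ q)
          = proj g (p ++ (startRule g).output ++ q) := by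
        simp [proj_append, startRule, proj, π, U]
      rwa [← this]
    · -- U → ε : projection unchanged
      refine ⟨s, hs, ?_⟩
      have : proj g (p ++ [Symbol.nonterminal (nilRule g).input] ++ q)
          = proj g (p ++ (nilRule g).output ++ q) := by
        simp [proj_append, nilRule, proj, π]
      rwa [← this]
    · -- U → a U : a terminal is inserted
      refine ⟨s, hs, hins.trans ?_⟩
      have h1 : proj g (p ++ [Symbol.nonterminal (consRule g a).input] ++ q)
          = proj g p ++ proj g q := by
        simp [proj_append, consRule, proj, π]
      have h2 : proj g (p ++ (consRule g a).output ++ q)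
          = proj g p ++ Symbol.terminal a :: proj g q := by
        simp [proj_append, consRule, proj, π, U]
      rw [h1, h2]
      exact Ins.insert_middle _ _ a
    · -- simulated rule
      have h1 : proj g (p ++ [Symbol.nonterminal (mapRule g r₀).input] ++ q)
          = proj g p ++ Symbol.nonterminal r₀.input :: proj g q := by
        simp [proj_append, mapRule, proj, π]
      rw [h1] at hins
      obtain ⟨p₀, q₀, rfl, hp, hq⟩ := hins.split_nt
      refine ⟨p₀ ++ r₀.output ++ q₀, ?_, ?_⟩
      · exact hs.trans_produces ⟨r₀, hr₀, by
          simpa using ContextFreeRule.rewrites_of_exists_parts r₀ p₀ q₀⟩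
      · have h2 : proj g (p ++ (mapRule g r₀).output ++ q)
            = proj g p ++ r₀.output ++ proj g q := by
          simp [proj_append, mapRule, proj_emb]
        rw [h2]
        have := (hp.append (Ins.refl r₀.output)).append hq
        simpa [List.append_assoc] using this

lemma language_g' : (g' g).language = {w : List α | ∃ v ∈ g.language, v.Sublist w} := by
  ext w
  constructor
  · intro hw
    obtain ⟨s, hs, hins⟩ := soundness g hw
    rw [proj_map_terminal] at hins
    obtain ⟨v, hvw, rfl⟩ := List.sublist_map_iff.1 hins.sublist
    exact ⟨v, hs, hvw⟩
  · rintro ⟨v, hv, hvw⟩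
    show (g' g).Derives _ _
    have step1 : (g' g).Produces [Symbol.nonterminal (g' g).initial]
        [Symbol.nonterminal (some (some g.initial)), U g] :=
      ⟨startRule g, startRule_mem g, by
        simpa [startRule] using ContextFreeRule.Rewrites.head (r := startRule g) []⟩
    have step2 : (g' g).Derives [Symbol.nonterminal (some (some g.initial)), U g]
        (emb g (v.map Symbol.terminal) ++ [U g]) := by
      have := (derives_emb g hv).append_right [U g]
      simpa [emb, f, U] using this
    exact step1.trans_derives (step2.trans (derives_supersequence g hvw))

end UpClosureAux

/-- The upward closure under the scattered-subword order of a context-free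
language is context-free. -/
theorem upward_closure_isContextFree {α : Type*} [Fintype α] (L : Language α)
    (hCF : L.IsContextFree) :
    Language.IsContextFree ({w : List α | ∃ v ∈ L, v.Sublist w} : Language α) := by
  obtain ⟨g, rfl⟩ := hCF
  exact ⟨UpClosureAux.g' g, UpClosureAux.language_g' g⟩
end

section
/- Let Σ be a finite alphabet and let x = a₁a₂⋯a_s be a word over Σ in which every letter of Σ occurs at most once. Then the set {z over Σ : x is a type of z} is exactly the concatenation of languages ({a₁} ∪ a₁Σ*a₁)·({a₂} ∪ a₂Σ*a₂)⋯({a_s} ∪ a_sΣ*a_s), and in particular this set is a regular language. -/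
/-- `z` has type `x`: there is a monoid homomorphism `h` on words (given here by
its action, preserving the empty word and concatenation) sending each letter `a`
either to `a` or to a word of the form `a·v·a`, with `h x = z`.  (The requirement
that each letter occurs at most once in `x` is a hypothesis of the theorem.) -/
def IsTypeOf {α : Type*} (x z : List α) : Prop :=
  ∃ h : List α → List α, h [] = [] ∧
    (∀ u v : List α, h (u ++ v) = h u ++ h v) ∧
    (∀ a : α, h [a] = [a] ∨ ∃ v : List α, h [a] = [a] ++ v ++ [a]) ∧
    h x = z

open Classical in
noncomputable def oneDFA (α : Type*) : DFA α Bool where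
  step := fun _ _ => false
  start := true
  accept := {true}

theorem oneDFA_evalFrom_false {α : Type*} (w : List α) :
    (oneDFA α).evalFrom false w = false := by
  induction w with
  | nil => rfl
  | cons a t ih => exact ih

theorem oneDFA_accepts (α : Type*) : (oneDFA α).accepts = 1 := by
  ext w
  rw [DFA.mem_accepts]
  cases w with
  | nil => simpa [oneDFA, DFA.eval] using Language.nil_mem_one
  | cons a t =>
      have h : (oneDFA α).eval (a :: t) = false := oneDFA_evalFrom_false t
      rw [h]
      simp [oneDFA, Language.mem_one]

theorem lang_isRegular_one {α : Type*} : (1 : Language α).IsRegular :=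
  ⟨Bool, inferInstance, oneDFA α, oneDFA_accepts α⟩

noncomputable def topDFA (α : Type*) : DFA α Unit where
  step := fun _ _ => ()
  start := ()
  accept := Set.univ

theorem isRegular_top {α : Type*} : (⊤ : Language α).IsRegular := by
  refine ⟨Unit, inferInstance, topDFA α, ?_⟩
  ext w
  simp [DFA.mem_accepts, topDFA]
  trivial

open Classical in
noncomputable def letterDFA {α : Type*} (a : α) : DFA α (Option Bool) where
  step := fun s b => match s with
    | some true => if b = a then some false else none
    | _ => none
  start := some true
  accept := {some false}

theorem letterDFA_evalFrom_none {α : Type*} (a : α) (w : List α) :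
    (letterDFA a).evalFrom none w = none := by
  induction w with
  | nil => rfl
  | cons b t ih => exact ih

theorem letterDFA_evalFrom_false {α : Type*} (a : α) (w : List α) (b : α) :
    (letterDFA a).evalFrom (some false) (b :: w) = none :=
  letterDFA_evalFrom_none a w

theorem letterDFA_eval {α : Type*} (a : α) (w : List α) :
    (letterDFA a).eval w = some false ↔ w = [a] := by
  classical
  cases w with
  | nil => simp [DFA.eval, letterDFA]
  | cons b t =>
      have hstep : (letterDFA a).eval (b :: t)
          = (letterDFA a).evalFrom (if b = a then some false else none) t := rfl
      rw [hstep]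
      by_cases hb : b = a
      · subst hb
        rw [if_pos rfl]
        cases t with
        | nil => simp
        | cons c t' =>
            rw [letterDFA_evalFrom_false b t' c]
            simp
      · rw [if_neg hb, letterDFA_evalFrom_none]
        simp [hb]

theorem letterDFA_accepts {α : Type*} (a : α) :
    (letterDFA a).accepts = ({[a]} : Language α) := by
  ext w
  rw [DFA.mem_accepts]
  show (letterDFA a).eval w ∈ ({some false} : Set (Option Bool)) ↔ w ∈ ({[a]} : Set (List α))
  rw [Set.mem_singleton_iff, Set.mem_singleton_iff, letterDFA_eval]

noncomputable def addDFA {α σ₁ σ₂ : Type*} (M₁ : DFA α σ₁) (M₂ : DFA α σ₂) :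
    DFA α (σ₁ × σ₂) where
  step := fun p a => (M₁.step p.1 a, M₂.step p.2 a)
  start := (M₁.start, M₂.start)
  accept := {p | p.1 ∈ M₁.accept ∨ p.2 ∈ M₂.accept}

theorem addDFA_evalFrom {α σ₁ σ₂ : Type*} (M₁ : DFA α σ₁) (M₂ : DFA α σ₂)
    (s₁ : σ₁) (s₂ : σ₂) (w : List α) :
    (addDFA M₁ M₂).evalFrom (s₁, s₂) w = (M₁.evalFrom s₁ w, M₂.evalFrom s₂ w) := by
  induction w generalizing s₁ s₂ with
  | nil => rfl
  | cons a t ih => exact ih _ _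

theorem addDFA_accepts {α σ₁ σ₂ : Type*} (M₁ : DFA α σ₁) (M₂ : DFA α σ₂) :
    (addDFA M₁ M₂).accepts = M₁.accepts + M₂.accepts := by
  ext w
  rw [Language.mem_add, DFA.mem_accepts, DFA.mem_accepts, DFA.mem_accepts]
  show (addDFA M₁ M₂).evalFrom (M₁.start, M₂.start) w ∈ _ ↔ _
  rw [addDFA_evalFrom]
  rfl

theorem Language.IsRegular.add' {α : Type*} {L₁ L₂ : Language α}
    (h₁ : L₁.IsRegular) (h₂ : L₂.IsRegular) : (L₁ + L₂).IsRegular := by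
  obtain ⟨σ₁, _, M₁, rfl⟩ := h₁
  obtain ⟨σ₂, _, M₂, rfl⟩ := h₂
  exact ⟨σ₁ × σ₂, inferInstance, addDFA M₁ M₂, addDFA_accepts M₁ M₂⟩

/-- Concatenation DFA. -/
noncomputable def catDFA {α σ₁ σ₂ : Type*} (M₁ : DFA α σ₁) (M₂ : DFA α σ₂) :
    DFA α (σ₁ × Set σ₂) where
  step := fun p a =>
    (M₁.step p.1 a,
      {t | ∃ s ∈ p.2, M₂.step s a = t} ∪ {t | M₁.step p.1 a ∈ M₁.accept ∧ t = M₂.start})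
  start := (M₁.start, {t | M₁.start ∈ M₁.accept ∧ t = M₂.start})
  accept := {p | ∃ t ∈ p.2, t ∈ M₂.accept}

theorem catDFA_eval {α σ₁ σ₂ : Type*} (M₁ : DFA α σ₁) (M₂ : DFA α σ₂) (w : List α) :
    (catDFA M₁ M₂).eval w = (M₁.eval w,
      {t | ∃ u v, w = u ++ v ∧ M₁.eval u ∈ M₁.accept ∧ M₂.evalFrom M₂.start v = t}) := by
  induction w using List.reverseRecOn with
  | nil =>
      show (catDFA M₁ M₂).start = _
      unfold catDFA
      simp only [DFA.eval_nil]
      congr 1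
      ext t
      constructor
      · rintro ⟨h1, rfl⟩
        exact ⟨[], [], rfl, h1, rfl⟩
      · rintro ⟨u, v, huv, hu, rfl⟩
        obtain ⟨hu0, hv0⟩ := List.append_eq_nil_iff.mp huv.symm
        subst hu0; subst hv0
        exact ⟨hu, rfl⟩
  | append_singleton w a ih =>
      rw [DFA.eval_append_singleton, ih, DFA.eval_append_singleton]
      show (M₁.step (M₁.eval w) a, _) = _
      congr 1
      ext t
      constructor
      · rintro (⟨s, ⟨u, v, rfl, hu, rfl⟩, rfl⟩ | ⟨hacc, rfl⟩)
        · exact ⟨u, v ++ [a], by simp, hu, (M₂.evalFrom_append_singleton _ _ _)⟩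
        · refine ⟨w ++ [a], [], by simp, ?_, rfl⟩
          rw [DFA.eval_append_singleton]; exact hacc
      · rintro ⟨u, v, huv, hu, rfl⟩
        rcases List.eq_nil_or_concat v with rfl | ⟨v', c, rfl⟩
        · rw [List.append_nil] at huv
          subst huv
          rw [DFA.eval_append_singleton] at hu
          exact Or.inr ⟨hu, rfl⟩
        · rw [List.concat_eq_append] at huv ⊢
          rw [← List.append_assoc] at huv
          obtain ⟨h1, h2⟩ := List.append_inj' huv (by simp)
          obtain rfl : a = c := by simpa using h2
          refine Or.inl ⟨M₂.evalFrom M₂.start v', ⟨u, v', h1, hu, rfl⟩, ?_⟩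
          rw [M₂.evalFrom_append_singleton]

theorem catDFA_accepts {α σ₁ σ₂ : Type*} (M₁ : DFA α σ₁) (M₂ : DFA α σ₂) :
    (catDFA M₁ M₂).accepts = M₁.accepts * M₂.accepts := by
  ext w
  rw [DFA.mem_accepts, Language.mem_mul]
  show (catDFA M₁ M₂).eval w ∈ _ ↔ _
  rw [catDFA_eval]
  constructor
  · rintro ⟨t, ⟨u, v, rfl, hu, rfl⟩, ht⟩
    exact ⟨u, hu, v, ht, rfl⟩
  · rintro ⟨u, hu, v, hv, rfl⟩
    exact ⟨M₂.evalFrom M₂.start v, ⟨u, v, rfl, hu, rfl⟩, hv⟩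

theorem Language.IsRegular.mul {α : Type*} {L₁ L₂ : Language α}
    (h₁ : L₁.IsRegular) (h₂ : L₂.IsRegular) : (L₁ * L₂).IsRegular := by
  obtain ⟨σ₁, _, M₁, rfl⟩ := h₁
  obtain ⟨σ₂, _, M₂, rfl⟩ := h₂
  exact ⟨σ₁ × Set σ₂, @instFintypeProd _ _ ‹_› (Fintype.ofFinite _),
    catDFA M₁ M₂, catDFA_accepts M₁ M₂⟩

theorem isRegular_letter {α : Type*} (a : α) : ({[a]} : Language α).IsRegular :=
  ⟨Option Bool, inferInstance, letterDFA a, letterDFA_accepts a⟩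
theorem flatMap_congr' {α : Type*} (l : List α) (g₁ g₂ : α → List α)
    (h : ∀ b ∈ l, g₁ b = g₂ b) : l.flatMap g₁ = l.flatMap g₂ := by
  induction l with
  | nil => rfl
  | cons b t ih =>
      simp only [List.flatMap_cons]
      rw [h b (by simp), ih (fun c hc => h c (by simp [hc]))]

theorem hom_eq_flatMap {α : Type*} (h : List α → List α) (h0 : h [] = [])
    (happ : ∀ u v, h (u ++ v) = h u ++ h v) :
    ∀ u, h u = u.flatMap (fun b => h [b]) := by
  intro u
  induction u with
  | nil => simpa using h0
  | cons b t ih =>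
      have : h (b :: t) = h [b] ++ h t := happ [b] t
      rw [this, ih, List.flatMap_cons]

theorem typeLang_eq {α : Type*} (x : List α) (hx : x.Nodup) :
    ({z : List α | IsTypeOf x z} : Language α)
      = (x.map (fun a => ({[a]} : Language α) + {[a]} * ⊤ * {[a]})).prod := by
  classical
  induction x with
  | nil =>
      ext z
      simp only [List.map_nil, List.prod_nil]
      constructor
      · rintro ⟨h, h0, _, _, rfl⟩
        exact (Language.mem_one (h [])).mpr h0
      · intro hz
        replace hz := (Language.mem_one z).mp hz
        subst hz
        exact ⟨id, rfl, fun _ _ => rfl, fun a => Or.inl rfl, rfl⟩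
  | cons a x' ih =>
      have hax' : a ∉ x' := (List.nodup_cons.mp hx).1
      have hx' : x'.Nodup := (List.nodup_cons.mp hx).2
      ext z
      simp only [List.map_cons, List.prod_cons]
      constructor
      · rintro ⟨h, h0, happ, hlet, rfl⟩
        have hsplit : h (a :: x') = h [a] ++ h x' := happ [a] x'
        rw [hsplit]
        refine Language.append_mem_mul ?_ ?_
        · rcases hlet a with h1 | ⟨v, h1⟩
          · rw [Language.mem_add]
            exact Or.inl (by rw [h1]; rfl)
          · rw [Language.mem_add]
            refine Or.inr ?_
            rw [h1]
            exact Language.append_mem_mul (Language.append_mem_mul rfl trivial) rfl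
        · rw [← ih hx']
          exact ⟨h, h0, happ, hlet, rfl⟩
      · intro hz
        replace hz := Language.mem_mul.mp hz
        obtain ⟨z₁, hz₁, z', hz', rfl⟩ := hz
        rw [← ih hx'] at hz'
        obtain ⟨h', p0, papp, plet, hpx⟩ := hz'
        set g : α → List α := fun b => if b = a then z₁ else h' [b] with hg
        refine ⟨fun u => u.flatMap g, by simp, fun u v => List.flatMap_append, ?_, ?_⟩
        · intro b
          show [b].flatMap g = [b] ∨ ∃ v, [b].flatMap g = [b] ++ v ++ [b]
          have hb : List.flatMap g [b] = g b := by simp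
          by_cases hba : b = a
          · subst hba
            have hgb : [b].flatMap g = z₁ := by simp [hg]
            rw [hgb]
            rw [Language.mem_add] at hz₁
            rcases hz₁ with h1 | h1
            · exact Or.inl h1
            · rw [Language.mem_mul] at h1
              obtain ⟨p, hp, q, hq, hpq⟩ := h1
              rw [Language.mem_mul] at hp
              obtain ⟨r, hr, s, _, hrs⟩ := hp
              replace hr : r = [b] := Set.mem_singleton_iff.mp hr; replace hq : q = [b] := Set.mem_singleton_iff.mp hq
              subst hr; subst hq
              refine Or.inr ⟨s, ?_⟩
              rw [← hpq, ← hrs, List.append_assoc]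
          · have hgb : [b].flatMap g = h' [b] := by simp [hg, hba]
            rw [hgb]
            exact plet b
        · show (a :: x').flatMap g = z₁ ++ z'
          rw [List.flatMap_cons]
          have h1 : g a = z₁ := by rw [hg]; simp
          have h2 : x'.flatMap g = z' := by
            rw [flatMap_congr' x' g (fun b => h' [b])
              (fun b hb => by rw [hg]; exact if_neg (by rintro rfl; exact hax' hb)),
              ← hom_eq_flatMap h' p0 papp, hpx]
          rw [h1, h2]

theorem prod_isRegular {α : Type*} (x : List α) :
    ((x.map (fun a => ({[a]} : Language α) + {[a]} * ⊤ * {[a]})).prod).IsRegular := by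
  induction x with
  | nil => exact lang_isRegular_one
  | cons a x' ih =>
      simp only [List.map_cons, List.prod_cons]
      exact (((isRegular_letter a).add' (((isRegular_letter a).mul isRegular_top).mul
        (isRegular_letter a)))).mul ih

/-- For a word `x = a₁⋯a_s` with no repeated letters, the set of words of type `x`
is exactly `({a₁} ∪ a₁Σ*a₁)⋯({a_s} ∪ a_sΣ*a_s)`, and in particular it is regular. -/
theorem type_language_eq_and_regular {α : Type*} [Fintype α] (x : List α)
    (hx : x.Nodup) :
    ({z : List α | IsTypeOf x z} : Language α)
        = (x.map (fun a => ({[a]} : Language α) + {[a]} * ⊤ * {[a]})).prod ∧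
      Language.IsRegular ({z : List α | IsTypeOf x z} : Language α) := by
  refine ⟨typeLang_eq x hx, ?_⟩
  rw [typeLang_eq x hx]
  exact prod_isRegular x
end

section
/- Let k be a natural number and let N be a nondeterministic finite automaton over the one-letter alphabet {a} whose accepted language is exactly { a^m : m ≥ k }. Then N has more than k states. -/
lemma nfa_path_of_mem {σ : Type*} (N : NFA Unit σ) (S : Set σ) :
    ∀ n q, q ∈ N.evalFrom S (List.replicate n ()) →
      ∃ f : ℕ → σ, f 0 ∈ S ∧ f n = q ∧ ∀ i < n, f (i+1) ∈ N.step (f i) () := by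
  intro n
  induction n with
  | zero =>
    intro q hq
    exact ⟨fun _ => q, hq, rfl, fun i hi => absurd hi (by omega)⟩
  | succ n ih =>
    intro q hq
    rw [show List.replicate (n+1) () = List.replicate n () ++ [()] by
      simp [List.replicate_succ']] at hq
    rw [NFA.evalFrom_append, NFA.evalFrom_singleton, NFA.mem_stepSet] at hq
    obtain ⟨p, hp, hstep⟩ := hq
    obtain ⟨f, hf0, hfn, hf⟩ := ih p hp
    refine ⟨fun m => if m ≤ n then f m else q, by simp [hf0], by simp, ?_⟩
    intro i hi
    by_cases h1 : i + 1 ≤ n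
    · simp only [if_pos h1, if_pos (Nat.le_of_succ_le h1)]
      exact hf i (by omega)
    · have hin : i = n := by omega
      subst hin
      simp only [if_neg h1, if_pos le_rfl, hfn]
      exact hstep

lemma nfa_mem_of_path {σ : Type*} (N : NFA Unit σ) (S : Set σ) :
    ∀ n (f : ℕ → σ), f 0 ∈ S → (∀ i < n, f (i+1) ∈ N.step (f i) ()) →
      f n ∈ N.evalFrom S (List.replicate n ()) := by
  intro n
  induction n with
  | zero => intro f h0 _; simpa [NFA.evalFrom] using h0
  | succ n ih =>
    intro f h0 hstep
    rw [show List.replicate (n+1) () = List.replicate n () ++ [()] by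
      simp [List.replicate_succ']]
    rw [NFA.evalFrom_append, NFA.evalFrom_singleton, NFA.mem_stepSet]
    exact ⟨f n, ih f h0 (fun i hi => hstep i (by omega)), hstep n (by omega)⟩

/-- Any NFA over a one-letter alphabet accepting exactly the words of length at
least `k` has more than `k` states. -/
theorem nfa_unary_upward_lower_bound (k : ℕ) {σ : Type*} [Fintype σ]
    (N : NFA Unit σ) (h : N.accepts = {w : List Unit | k ≤ w.length}) :
    k < Fintype.card σ := by
  by_contra hle
  push_neg at hle
  have hacc : List.replicate k () ∈ N.accepts := by
    rw [h]
    show k ≤ (List.replicate k ()).length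
    simp
  rw [NFA.mem_accepts] at hacc
  obtain ⟨q, hqacc, hq⟩ := hacc
  obtain ⟨f, hf0, hfk, hf⟩ := nfa_path_of_mem N N.start k q hq
  obtain ⟨x, y, hxy, hfeq⟩ := Fintype.exists_ne_map_eq_of_card_lt
      (fun m : Fin (k+1) => f m.val) (by simp; omega)
  obtain ⟨i, j, hij, hjk, hfij⟩ : ∃ i j : ℕ, i < j ∧ j ≤ k ∧ f i = f j := by
    have hx := x.isLt
    have hy := y.isLt
    rcases lt_or_gt_of_ne (fun hc => hxy (Fin.val_injective hc)) with hl | hl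
    · exact ⟨x, y, hl, by omega, hfeq⟩
    · exact ⟨y, x, hl, by omega, hfeq.symm⟩
  set d := j - i with hd
  set g : ℕ → σ := fun m => if m ≤ i then f m else f (m + d) with hg
  have hpath : ∀ m < k - d, g (m+1) ∈ N.step (g m) () := by
    intro m hm
    by_cases hm1 : m + 1 ≤ i
    · simp only [hg, if_pos hm1, if_pos (Nat.le_of_succ_le hm1)]
      exact hf m (by omega)
    · by_cases hm2 : m ≤ i
      · have hmi : m = i := by omega
        subst hmi
        simp only [hg, if_neg hm1, if_pos le_rfl]
        have h1 : m + 1 + d = j + 1 := by omega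
        rw [h1, hfij]
        exact hf j (by omega)
      · simp only [hg, if_neg hm1, if_neg hm2]
        have h1 : m + 1 + d = (m + d) + 1 := by omega
        rw [h1]
        exact hf (m + d) (by omega)
  have hg0 : g 0 ∈ N.start := by
    simp only [hg, if_pos (Nat.zero_le i)]; exact hf0
  have hend : g (k - d) = q := by
    by_cases hc : k - d ≤ i
    · have hji : j = k := by omega
      have : k - d = i := by omega
      simp only [hg, this, if_pos le_rfl]
      rw [hfij, hji]
      exact hfk
    · simp only [hg, if_neg hc]
      rw [show k - d + d = k by omega, hfk]
  have hmem := nfa_mem_of_path N N.start (k - d) g hg0 hpath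
  rw [hend] at hmem
  have : List.replicate (k - d) () ∈ N.accepts := by
    rw [NFA.mem_accepts]; exact ⟨q, hqacc, hmem⟩
  rw [h] at this
  have hlen : k ≤ (List.replicate (k - d) ()).length := this
  simp only [List.length_replicate] at hlen
  omega
end
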